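/- arXiv:2205.02099 — 3 statements merged into one kernel-verified Lean document; each statement's English description precedes it below -/
import Mathlib

section
/- There exists a constant C such that |b(u,v,w)| ≤ C ‖u‖_H^{1/2} ‖u‖_V^{1/2} ‖v‖_V ‖w‖_H^{1/2} ‖w‖_V^{1/2} for all u, v, w ∈ V, where ‖·‖_H is the L² norm and ‖·‖_V is the H¹₀ (gradient L²) norm over a bounded 2D domain. -/
open MeasureTheory

/-- The Navier–Stokes convection trilinear form
`b(u,v,w) = ∑_{i,j} ∫_O u_i (∂v_j/∂x_i) w_j dx`. -/
noncomputable def trilinB (O : Set (EuclideanSpace ℝ (Fin 2)))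
    (u v w : EuclideanSpace ℝ (Fin 2) → EuclideanSpace ℝ (Fin 2)) : ℝ :=
  ∑ i : Fin 2, ∑ j : Fin 2,
    ∫ x in O, u x i * (fderiv ℝ (fun y => v y j) x) (EuclideanSpace.single i 1) * w x j

/-- A vector field is divergence free. -/
def DivFree (u : EuclideanSpace ℝ (Fin 2) → EuclideanSpace ℝ (Fin 2)) : Prop :=
  ∀ x, ∑ i : Fin 2, (fderiv ℝ (fun y => u y i) x) (EuclideanSpace.single i 1) = 0

/-- Membership in the dense subspace `𝒱` of `V`: smooth, compactly supported in `O`,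
divergence free. -/
def TestV (O : Set (EuclideanSpace ℝ (Fin 2)))
    (u : EuclideanSpace ℝ (Fin 2) → EuclideanSpace ℝ (Fin 2)) : Prop :=
  ContDiff ℝ (⊤ : ℕ∞) u ∧ HasCompactSupport u ∧ tsupport u ⊆ O ∧ DivFree u

/-- The `L²` norm `‖u‖_H` over `O`. -/
noncomputable def Hnorm (O : Set (EuclideanSpace ℝ (Fin 2)))
    (u : EuclideanSpace ℝ (Fin 2) → EuclideanSpace ℝ (Fin 2)) : ℝ :=
  Real.sqrt (∫ x in O, ‖u x‖ ^ 2)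

/-- The `H¹₀` (gradient `L²`) norm `‖u‖_V` over `O`. -/
noncomputable def Vnorm (O : Set (EuclideanSpace ℝ (Fin 2)))
    (u : EuclideanSpace ℝ (Fin 2) → EuclideanSpace ℝ (Fin 2)) : ℝ :=
  Real.sqrt (∫ x in O, ∑ i : Fin 2, ∑ j : Fin 2,
    ((fderiv ℝ (fun y => u y j) x) (EuclideanSpace.single i 1)) ^ 2)

section Aux

open Real ENNReal NNReal

local notation "Esp" => EuclideanSpace ℝ (Fin 2)

-- component of a smooth vector field is smooth
lemma comp_contDiff {v : Esp → Esp} (hv : ContDiff ℝ (⊤ : ℕ∞) v) (j : Fin 2) :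
    ContDiff ℝ (⊤ : ℕ∞) (fun y => v y j) :=
  (EuclideanSpace.proj (𝕜 := ℝ) j).contDiff.comp hv

lemma comp_hcs {v : Esp → Esp} (hv : HasCompactSupport v) (j : Fin 2) :
    HasCompactSupport (fun y => v y j) :=
  hv.comp_left (g := fun z : Esp => z j) rfl

lemma pd_continuous {f : Esp → ℝ} (hf : ContDiff ℝ (⊤ : ℕ∞) f) (e : Esp) :
    Continuous (fun x => fderiv ℝ f x e) :=
  (hf.continuous_fderiv (by simp)).clm_apply continuous_const

lemma pd_hcs {f : Esp → ℝ} (hf : HasCompactSupport f) (e : Esp) :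
    HasCompactSupport (fun x => fderiv ℝ f x e) :=
  (hf.fderiv ℝ).comp_left (g := fun L : Esp →L[ℝ] ℝ => L e) rfl

lemma fderiv_zero_outside {f : Esp → ℝ} {x : Esp} (hx : x ∉ tsupport f) :
    fderiv ℝ f x = 0 := by
  have h : f =ᶠ[nhds x] (fun _ => (0:ℝ)) := by
    filter_upwards [(isClosed_tsupport f).isOpen_compl.mem_nhds hx] with y hy
    exact image_eq_zero_of_notMem_tsupport hy
  rw [h.fderiv_eq, fderiv_fun_const]
  rfl

-- op norm bound
lemma opnorm_sq_le (L : Esp →L[ℝ] ℝ) :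
    ‖L‖ ^ 2 ≤ ∑ i : Fin 2, (L (EuclideanSpace.single i 1)) ^ 2 := by
  have h : ‖L‖ ≤ Real.sqrt (∑ i : Fin 2, (L (EuclideanSpace.single i 1)) ^ 2) := by
    refine L.opNorm_le_bound (Real.sqrt_nonneg _) (fun x => ?_)
    have hx : x = ∑ i : Fin 2, EuclideanSpace.single i (x i) := by
      ext j
      simp [EuclideanSpace.single_apply]
      fin_cases j <;> simp
    have hLx : L x = ∑ i : Fin 2, x i * L (EuclideanSpace.single i 1) := by
      conv_lhs => rw [hx]
      rw [map_sum]
      congr 1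
      ext i
      have : EuclideanSpace.single i (x i) = (x i) • EuclideanSpace.single i (1:ℝ) := by
        ext j; simp [EuclideanSpace.single_apply]
      rw [this, L.map_smul]; rfl
    rw [hLx]
    calc ‖∑ i : Fin 2, x i * L (EuclideanSpace.single i 1)‖
        = Real.sqrt ((∑ i : Fin 2, x i * L (EuclideanSpace.single i 1))^2) := by
          rw [Real.sqrt_sq_eq_abs]; rfl
      _ ≤ Real.sqrt ((∑ i : Fin 2, (x i)^2) * ∑ i : Fin 2, (L (EuclideanSpace.single i 1))^2) := by
          apply Real.sqrt_le_sqrt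
          exact Finset.sum_mul_sq_le_sq_mul_sq _ _ _
      _ = Real.sqrt (∑ i : Fin 2, (x i)^2) * Real.sqrt (∑ i : Fin 2, (L (EuclideanSpace.single i 1))^2) := by
          rw [Real.sqrt_mul (by positivity)]
      _ = Real.sqrt (∑ i : Fin 2, (L (EuclideanSpace.single i 1))^2) * ‖x‖ := by
          rw [EuclideanSpace.norm_eq]
          simp only [Real.norm_eq_abs, sq_abs]
          ring
  calc ‖L‖^2 ≤ (Real.sqrt (∑ i : Fin 2, (L (EuclideanSpace.single i 1))^2))^2 := by
        apply pow_le_pow_left₀ (norm_nonneg _) h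
    _ = _ := Real.sq_sqrt (by positivity)

-- Cauchy-Schwarz for integrals of continuous compactly supported nonneg functions
lemma intCS' {f g : Esp → ℝ} (hf : Continuous f) (hg : Continuous g)
    (hfc : HasCompactSupport f) (hgc : HasCompactSupport g)
    (hf0 : ∀ x, 0 ≤ f x) (hg0 : ∀ x, 0 ≤ g x) :
    ∫ x, f x * g x ≤ Real.sqrt (∫ x, (f x)^2) * Real.sqrt (∫ x, (g x)^2) := by
  have hpq : (2:ℝ).HolderConjugate 2 := Real.HolderConjugate.two_two
  have hmf : MemLp f (ENNReal.ofReal 2) volume := by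
    rw [show ENNReal.ofReal 2 = (2 : ENNReal) by norm_num]
    exact hf.memLp_of_hasCompactSupport hfc
  have hmg : MemLp g (ENNReal.ofReal 2) volume := by
    rw [show ENNReal.ofReal 2 = (2 : ENNReal) by norm_num]
    exact hg.memLp_of_hasCompactSupport hgc
  have := integral_mul_le_Lp_mul_Lq_of_nonneg hpq (ae_of_all _ hf0) (ae_of_all _ hg0) hmf hmg
  have h2 : ∀ h : Esp → ℝ, Real.sqrt (∫ x, (h x)^2) = (∫ x, h x ^ (2:ℝ)) ^ ((1:ℝ)/2) := by
    intro h
    rw [Real.sqrt_eq_rpow]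
    congr 1
    refine integral_congr_ae (ae_of_all _ fun x => ?_)
    show h x ^ (2:ℕ) = h x ^ (2:ℝ)
    exact_mod_cast (Real.rpow_natCast (h x) 2).symm
  rw [h2 f, h2 g]
  exact this

lemma lady : ∃ K : ℝ, 0 < K ∧ ∀ f : Esp → ℝ, ContDiff ℝ (⊤ : ℕ∞) f → HasCompactSupport f →
    Real.sqrt (∫ x, (f x)^4) ≤
      K * Real.sqrt (∫ x, (f x)^2) * Real.sqrt (∫ x, ‖fderiv ℝ f x‖^2) := by
  set C : NNReal := eLpNormLESNormFDerivOneConst (volume : Measure Esp) 2 with hC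
  refine ⟨2 * C + 1, by positivity, fun f hf hfc => ?_⟩
  set g : Esp → ℝ := fun x => f x * f x with hgdef
  have hgsm : ContDiff ℝ (⊤ : ℕ∞) g := hf.mul hf
  have hg1 : ContDiff ℝ 1 g := hgsm.of_le (by simp)
  have hgc : HasCompactSupport g := hfc.mul_left
  have hp : NNReal.HolderConjugate (Module.finrank ℝ Esp) 2 := by
    rw [finrank_euclideanSpace_fin]
    exact_mod_cast NNReal.HolderConjugate.two_two
  have key := eLpNorm_le_eLpNorm_fderiv_one (volume : Measure Esp) hg1 hgc hp
  -- derivative of g is integrable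
  have hDgc : Continuous (fderiv ℝ g) := hgsm.continuous_fderiv (by simp)
  have hDgs : HasCompactSupport (fderiv ℝ g) := hgc.fderiv ℝ
  have hDgi : Integrable (fderiv ℝ g) volume := hDgc.integrable_of_hasCompactSupport hDgs
  -- LHS identification
  have hmg : MemLp g 2 volume := hgsm.continuous.memLp_of_hasCompactSupport hgc
  have hLHS : eLpNorm g 2 volume = ENNReal.ofReal (Real.sqrt (∫ x, (f x)^4)) := by
    rw [hmg.eLpNorm_eq_integral_rpow_norm two_ne_zero ENNReal.ofNat_ne_top]
    congr 1
    rw [Real.sqrt_eq_rpow]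
    norm_num
    congr 1
    refine integral_congr_ae (ae_of_all _ fun x => ?_)
    show g x ^ 2 = f x ^ 4
    simp only [hgdef]
    ring
  -- RHS identification
  have hRHS : eLpNorm (fderiv ℝ g) 1 volume = ENNReal.ofReal (∫ x, ‖fderiv ℝ g x‖) := by
    rw [eLpNorm_one_eq_lintegral_enorm, ← ofReal_integral_norm_eq_lintegral_enorm hDgi]
  have key2 : ENNReal.ofReal (Real.sqrt (∫ x, (f x)^4)) ≤
      (C:ℝ≥0∞) * ENNReal.ofReal (∫ x, ‖fderiv ℝ g x‖) := by
    rw [← hLHS, ← hRHS]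
    exact_mod_cast key
  -- to real inequality
  have hS : Real.sqrt (∫ x, (f x)^4) ≤ (C:ℝ) * ∫ x, ‖fderiv ℝ g x‖ := by
    have h1 : ((C:ℝ≥0∞) * ENNReal.ofReal (∫ x, ‖fderiv ℝ g x‖)).toReal
        = (C:ℝ) * ∫ x, ‖fderiv ℝ g x‖ := by
      rw [ENNReal.toReal_mul, ENNReal.coe_toReal,
        ENNReal.toReal_ofReal (integral_nonneg (fun x => norm_nonneg _))]
    calc Real.sqrt (∫ x, (f x)^4)
        = (ENNReal.ofReal (Real.sqrt (∫ x, (f x)^4))).toReal := by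
          rw [ENNReal.toReal_ofReal (Real.sqrt_nonneg _)]
      _ ≤ ((C:ℝ≥0∞) * ENNReal.ofReal (∫ x, ‖fderiv ℝ g x‖)).toReal := by
          apply ENNReal.toReal_mono _ key2
          exact ENNReal.mul_ne_top ENNReal.coe_ne_top ENNReal.ofReal_ne_top
      _ = _ := h1
  -- bound the L¹ norm of Dg
  have hDf : Continuous (fderiv ℝ f) := hf.continuous_fderiv (by simp)
  have habs : Continuous (fun x => |f x|) := hf.continuous.abs
  have hnDf : Continuous (fun x => ‖fderiv ℝ f x‖) := hDf.norm
  have habsc : HasCompactSupport (fun x => |f x|) := hfc.abs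
  have hnDfc : HasCompactSupport (fun x => ‖fderiv ℝ f x‖) := (hfc.fderiv ℝ).norm
  have hI : ∫ x, ‖fderiv ℝ g x‖ ≤
      2 * (Real.sqrt (∫ x, (f x)^2) * Real.sqrt (∫ x, ‖fderiv ℝ f x‖^2)) := by
    have hpt : ∀ x, ‖fderiv ℝ g x‖ ≤ 2 * (|f x| * ‖fderiv ℝ f x‖) := by
      intro x
      have hdx : DifferentiableAt ℝ f x := hf.differentiable (by simp) x
      have : fderiv ℝ g x = f x • fderiv ℝ f x + f x • fderiv ℝ f x := fderiv_mul hdx hdx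
      rw [this]
      calc ‖f x • fderiv ℝ f x + f x • fderiv ℝ f x‖
          ≤ ‖f x • fderiv ℝ f x‖ + ‖f x • fderiv ℝ f x‖ := norm_add_le _ _
        _ = 2 * (|f x| * ‖fderiv ℝ f x‖) := by rw [norm_smul]; simp [Real.norm_eq_abs]; ring
    have hint2 : Integrable (fun x => 2 * (|f x| * ‖fderiv ℝ f x‖)) volume := by
      have hbase : Integrable (fun x => |f x| * ‖fderiv ℝ f x‖) volume :=
        (habs.mul hnDf).integrable_of_hasCompactSupport hnDfc.mul_left
      exact hbase.const_mul 2
    calc ∫ x, ‖fderiv ℝ g x‖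
        ≤ ∫ x, 2 * (|f x| * ‖fderiv ℝ f x‖) := integral_mono hDgi.norm hint2 hpt
      _ = 2 * ∫ x, |f x| * ‖fderiv ℝ f x‖ := by rw [integral_const_mul]
      _ ≤ 2 * (Real.sqrt (∫ x, |f x|^2) * Real.sqrt (∫ x, ‖fderiv ℝ f x‖^2)) := by
          apply mul_le_mul_of_nonneg_left _ (by norm_num)
          exact intCS' habs hnDf habsc hnDfc (fun x => abs_nonneg _) (fun x => norm_nonneg _)
      _ = 2 * (Real.sqrt (∫ x, (f x)^2) * Real.sqrt (∫ x, ‖fderiv ℝ f x‖^2)) := by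
          congr 3
          exact integral_congr_ae (ae_of_all _ fun x => sq_abs (f x))
  calc Real.sqrt (∫ x, (f x)^4)
      ≤ (C:ℝ) * (2 * (Real.sqrt (∫ x, (f x)^2) * Real.sqrt (∫ x, ‖fderiv ℝ f x‖^2))) :=
        hS.trans (mul_le_mul_of_nonneg_left hI C.coe_nonneg)
    _ ≤ (2 * C + 1) * Real.sqrt (∫ x, (f x)^2) * Real.sqrt (∫ x, ‖fderiv ℝ f x‖^2) := by
        have h1 : (0:ℝ) ≤ Real.sqrt (∫ x, (f x)^2) := Real.sqrt_nonneg _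
        have h2 : (0:ℝ) ≤ Real.sqrt (∫ x, ‖fderiv ℝ f x‖^2) := Real.sqrt_nonneg _
        nlinarith [mul_nonneg h1 h2, C.coe_nonneg]

-- the per-term bound
lemma termBound {u v w : Esp → Esp} (hu : ContDiff ℝ (⊤ : ℕ∞) u) (huc : HasCompactSupport u)
    (hv : ContDiff ℝ (⊤ : ℕ∞) v) (hvc : HasCompactSupport v)
    (hw : ContDiff ℝ (⊤ : ℕ∞) w) (hwc : HasCompactSupport w) (i j : Fin 2) :
    |∫ x, u x i * (fderiv ℝ (fun y => v y j) x) (EuclideanSpace.single i 1) * w x j|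
      ≤ Real.sqrt (Real.sqrt (∫ x, (u x i)^4)) * Real.sqrt (Real.sqrt (∫ x, (w x j)^4)) *
        Real.sqrt (∫ x, ((fderiv ℝ (fun y => v y j) x) (EuclideanSpace.single i 1))^2) := by
  set p : Esp → ℝ := fun x => (fderiv ℝ (fun y => v y j) x) (EuclideanSpace.single i 1) with hp
  have hui : Continuous (fun x => u x i) := (comp_contDiff hu i).continuous
  have hwj : Continuous (fun x => w x j) := (comp_contDiff hw j).continuous
  have huic : HasCompactSupport (fun x => u x i) := comp_hcs huc i
  have hwjc : HasCompactSupport (fun x => w x j) := comp_hcs hwc j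
  have hpc : Continuous p := pd_continuous (comp_contDiff hv j) _
  have hpcs : HasCompactSupport p := pd_hcs (comp_hcs hvc j) _
  -- integrand is integrable
  have hprod : Continuous (fun x => u x i * p x * w x j) := (hui.mul hpc).mul hwj
  have hprodc : HasCompactSupport (fun x => u x i * p x * w x j) := by
    apply HasCompactSupport.mul_left (f' := fun x => w x j) (f := fun x => u x i * p x) hwjc
  have hint : Integrable (fun x => u x i * p x * w x j) volume :=
    hprod.integrable_of_hasCompactSupport hprodc
  have e1 : ∫ x, ((u x i)^2)^2 = ∫ x, (u x i)^4 := by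
    refine integral_congr_ae (ae_of_all _ fun x => ?_); ring
  have e2 : ∫ x, ((w x j)^2)^2 = ∫ x, (w x j)^4 := by
    refine integral_congr_ae (ae_of_all _ fun x => ?_); ring
  calc |∫ x, u x i * p x * w x j|
      = ‖∫ x, u x i * p x * w x j‖ := (Real.norm_eq_abs _).symm
    _ ≤ ∫ x, ‖u x i * p x * w x j‖ := norm_integral_le_integral_norm _
    _ = ∫ x, (|u x i| * |w x j|) * |p x| := by
        refine integral_congr_ae (ae_of_all _ fun x => ?_)
        simp only [Real.norm_eq_abs, abs_mul]; ring
    _ ≤ Real.sqrt (∫ x, (|u x i| * |w x j|)^2) * Real.sqrt (∫ x, (|p x|)^2) := by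
        refine intCS' (hui.abs.mul hwj.abs) hpc.abs ?_ hpcs.abs
          (fun x => mul_nonneg (abs_nonneg _) (abs_nonneg _)) (fun x => abs_nonneg _)
        exact hwjc.abs.mul_left
    _ = Real.sqrt (∫ x, ((u x i)^2) * ((w x j)^2)) * Real.sqrt (∫ x, (p x)^2) := by
        congr 2
        · refine integral_congr_ae (ae_of_all _ fun x => ?_)
          simp only [mul_pow, sq_abs]
        · refine integral_congr_ae (ae_of_all _ fun x => ?_)
          simp only [sq_abs]
    _ ≤ Real.sqrt (Real.sqrt (∫ x, ((u x i)^2)^2) * Real.sqrt (∫ x, ((w x j)^2)^2)) *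
          Real.sqrt (∫ x, (p x)^2) := by
        apply mul_le_mul_of_nonneg_right _ (Real.sqrt_nonneg _)
        apply Real.sqrt_le_sqrt
        have hsq1 : Continuous (fun x => (u x i)^2) := hui.pow 2
        have hsq2 : Continuous (fun x => (w x j)^2) := hwj.pow 2
        have hsq1c : HasCompactSupport (fun x => (u x i)^2) :=
          huic.comp_left (g := fun t : ℝ => t^2) (by norm_num)
        have hsq2c : HasCompactSupport (fun x => (w x j)^2) :=
          hwjc.comp_left (g := fun t : ℝ => t^2) (by norm_num)
        exact intCS' hsq1 hsq2 hsq1c hsq2c (fun x => sq_nonneg _) (fun x => sq_nonneg _)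
    _ = Real.sqrt (Real.sqrt (∫ x, (u x i)^4)) * Real.sqrt (Real.sqrt (∫ x, (w x j)^4)) *
          Real.sqrt (∫ x, (p x)^2) := by
        rw [e1, e2, Real.sqrt_mul (Real.sqrt_nonneg _)]

lemma tsup_comp (u : Esp → Esp) (j : Fin 2) :
    tsupport (fun y => u y j) ⊆ tsupport u := by
  apply closure_mono
  intro y hy
  simp only [Function.mem_support] at *
  intro h
  exact hy (by rw [h]; rfl)

lemma sq_hcs {f : Esp → ℝ} (hf : HasCompactSupport f) :
    HasCompactSupport (fun x => (f x)^2) :=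
  hf.comp_left (g := fun t : ℝ => t^2) (by norm_num)

lemma fieldBound {K : ℝ} (hK : 0 < K)
    (hlady : ∀ f : Esp → ℝ, ContDiff ℝ (⊤ : ℕ∞) f → HasCompactSupport f →
      Real.sqrt (∫ x, (f x)^4) ≤
        K * Real.sqrt (∫ x, (f x)^2) * Real.sqrt (∫ x, ‖fderiv ℝ f x‖^2))
    {O : Set Esp} {u : Esp → Esp} (hu : ContDiff ℝ (⊤ : ℕ∞) u) (huc : HasCompactSupport u)
    (huO : tsupport u ⊆ O) :
    ∑ i : Fin 2, Real.sqrt (∫ x, (u x i)^4) ≤ K * Hnorm O u * Vnorm O u := by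
  set a : Fin 2 → ℝ := fun i => ∫ x, (u x i)^2 with ha
  set b : Fin 2 → ℝ := fun i => ∫ x, ‖fderiv ℝ (fun y => u y i) x‖^2 with hb
  have ha0 : ∀ i, 0 ≤ a i := fun i => integral_nonneg (fun x => sq_nonneg _)
  have hb0 : ∀ i, 0 ≤ b i := fun i => integral_nonneg (fun x => sq_nonneg _)
  have hstep1 : ∑ i : Fin 2, Real.sqrt (∫ x, (u x i)^4) ≤
      K * ∑ i : Fin 2, Real.sqrt (a i) * Real.sqrt (b i) := by
    rw [Finset.mul_sum]
    refine Finset.sum_le_sum (fun i _ => ?_)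
    have := hlady _ (comp_contDiff hu i) (comp_hcs huc i)
    calc Real.sqrt (∫ x, (u x i)^4) ≤
        K * Real.sqrt (a i) * Real.sqrt (b i) := this
      _ = K * (Real.sqrt (a i) * Real.sqrt (b i)) := by ring
  have hstep2 : ∑ i : Fin 2, Real.sqrt (a i) * Real.sqrt (b i) ≤
      Real.sqrt (∑ i : Fin 2, a i) * Real.sqrt (∑ i : Fin 2, b i) :=
    Real.sum_sqrt_mul_sqrt_le _ ha0 hb0
  -- identify sum of a with Hnorm
  have hH : Real.sqrt (∑ i : Fin 2, a i) = Hnorm O u := by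
    rw [Hnorm]
    congr 1
    have hInt : ∀ i : Fin 2, Integrable (fun x => (u x i)^2) volume := by
      intro i
      exact (((comp_contDiff hu i).continuous).pow 2).integrable_of_hasCompactSupport
        (sq_hcs (comp_hcs huc i))
    rw [ha, ← integral_finset_sum _ (fun i _ => hInt i)]
    rw [setIntegral_eq_integral_of_forall_compl_eq_zero (fun x hx => ?_)]
    · refine integral_congr_ae (ae_of_all _ fun x => ?_)
      show ∑ i : Fin 2, (u x i)^2 = ‖u x‖^2
      rw [EuclideanSpace.norm_eq]
      rw [Real.sq_sqrt (Finset.sum_nonneg (fun i _ => sq_nonneg _))]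
      simp [Real.norm_eq_abs, sq_abs]
    · have : u x = 0 := image_eq_zero_of_notMem_tsupport (fun h => hx (huO h))
      rw [this]
      simp
  -- bound sum of b by Vnorm squared
  have hV : Real.sqrt (∑ i : Fin 2, b i) ≤ Vnorm O u := by
    have hVsq : ∑ i : Fin 2, b i ≤ (Vnorm O u)^2 := by
      have hple : ∀ i : Fin 2, b i ≤ ∫ x, ∑ k : Fin 2,
          ((fderiv ℝ (fun y => u y i) x) (EuclideanSpace.single k 1))^2 := by
        intro i
        refine integral_mono ?_ ?_ (fun x => opnorm_sq_le _)
        · exact (((comp_contDiff hu i).continuous_fderiv (by simp)).norm.pow 2).integrable_of_hasCompactSupport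
            (sq_hcs ((comp_hcs huc i).fderiv ℝ).norm)
        · apply integrable_finset_sum
          intro k _
          exact ((pd_continuous (comp_contDiff hu i) _).pow 2).integrable_of_hasCompactSupport
            (sq_hcs (pd_hcs (comp_hcs huc i) _))
      have hIntk : ∀ i k : Fin 2, Integrable
          (fun x => ((fderiv ℝ (fun y => u y i) x) (EuclideanSpace.single k 1))^2) volume := by
        intro i k
        exact ((pd_continuous (comp_contDiff hu i) _).pow 2).integrable_of_hasCompactSupport
          (sq_hcs (pd_hcs (comp_hcs huc i) _))
      calc ∑ i : Fin 2, b i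
          ≤ ∑ i : Fin 2, ∫ x, ∑ k : Fin 2,
              ((fderiv ℝ (fun y => u y i) x) (EuclideanSpace.single k 1))^2 :=
            Finset.sum_le_sum (fun i _ => hple i)
        _ = ∫ x, ∑ i : Fin 2, ∑ k : Fin 2,
              ((fderiv ℝ (fun y => u y i) x) (EuclideanSpace.single k 1))^2 := by
            rw [integral_finset_sum]
            intro i _
            exact integrable_finset_sum _ (fun k _ => hIntk i k)
        _ = ∫ x, ∑ k : Fin 2, ∑ i : Fin 2,
              ((fderiv ℝ (fun y => u y i) x) (EuclideanSpace.single k 1))^2 := by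
            refine integral_congr_ae (ae_of_all _ fun x => ?_)
            show (∑ i : Fin 2, ∑ k : Fin 2, _) = _
            rw [Finset.sum_comm]
        _ = ∫ x in O, ∑ k : Fin 2, ∑ i : Fin 2,
              ((fderiv ℝ (fun y => u y i) x) (EuclideanSpace.single k 1))^2 := by
            rw [setIntegral_eq_integral_of_forall_compl_eq_zero (fun x hx => ?_)]
            have hz : ∀ i : Fin 2, fderiv ℝ (fun y => u y i) x = 0 := by
              intro i
              exact fderiv_zero_outside (fun h => hx (huO (tsup_comp u i h)))
            simp [hz]
        _ = (Vnorm O u)^2 := by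
            rw [Vnorm, Real.sq_sqrt (integral_nonneg (fun x => by positivity))]
    calc Real.sqrt (∑ i : Fin 2, b i) ≤ Real.sqrt ((Vnorm O u)^2) := Real.sqrt_le_sqrt hVsq
      _ = Vnorm O u :=
        Real.sqrt_sq (by rw [Vnorm]; exact Real.sqrt_nonneg _)
  calc ∑ i : Fin 2, Real.sqrt (∫ x, (u x i)^4)
      ≤ K * ∑ i : Fin 2, Real.sqrt (a i) * Real.sqrt (b i) := hstep1
    _ ≤ K * (Real.sqrt (∑ i : Fin 2, a i) * Real.sqrt (∑ i : Fin 2, b i)) :=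
        mul_le_mul_of_nonneg_left hstep2 hK.le
    _ ≤ K * (Hnorm O u * Vnorm O u) := by
        rw [hH]
        refine mul_le_mul_of_nonneg_left ?_ hK.le
        refine mul_le_mul_of_nonneg_left hV ?_
        rw [Hnorm]; exact Real.sqrt_nonneg _
    _ = K * Hnorm O u * Vnorm O u := by ring

end Aux

/-- The 2D Ladyzhenskaya-type estimate:
`|b(u,v,w)| ≤ C ‖u‖_H^{1/2} ‖u‖_V^{1/2} ‖v‖_V ‖w‖_H^{1/2} ‖w‖_V^{1/2}`. -/
theorem stmt7 (O : Set (EuclideanSpace ℝ (Fin 2))) (hO : IsOpen O)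
    (hOb : Bornology.IsBounded O) :
    ∃ C : ℝ, 0 < C ∧
      ∀ u v w : EuclideanSpace ℝ (Fin 2) → EuclideanSpace ℝ (Fin 2),
        TestV O u → TestV O v → TestV O w →
        |trilinB O u v w| ≤ C * Real.sqrt (Hnorm O u) * Real.sqrt (Vnorm O u) *
          Vnorm O v * Real.sqrt (Hnorm O w) * Real.sqrt (Vnorm O w) := by
  obtain ⟨K, hK0, hlady⟩ := lady
  refine ⟨K, hK0, fun u v w hU hV hW => ?_⟩
  obtain ⟨hu, huc, huO, -⟩ := hU
  obtain ⟨hv, hvc, hvO, -⟩ := hV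
  obtain ⟨hw, hwc, hwO, -⟩ := hW
  set A : Fin 2 → ℝ := fun i => Real.sqrt (Real.sqrt (∫ x, (u x i)^4)) with hAdef
  set D : Fin 2 → ℝ := fun j => Real.sqrt (Real.sqrt (∫ x, (w x j)^4)) with hDdef
  set B : Fin 2 → Fin 2 → ℝ := fun i j =>
    Real.sqrt (∫ x, ((fderiv ℝ (fun y => v y j) x) (EuclideanSpace.single i 1))^2) with hBdef
  have hA0 : ∀ i, 0 ≤ A i := fun i => Real.sqrt_nonneg _
  have hD0 : ∀ j, 0 ≤ D j := fun j => Real.sqrt_nonneg _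
  have hB0 : ∀ i j, 0 ≤ B i j := fun i j => Real.sqrt_nonneg _
  -- step 1 : termwise bound
  have hstep1 : |trilinB O u v w| ≤ ∑ i : Fin 2, ∑ j : Fin 2, A i * D j * B i j := by
    rw [trilinB]
    calc |∑ i : Fin 2, ∑ j : Fin 2,
        ∫ x in O, u x i * (fderiv ℝ (fun y => v y j) x) (EuclideanSpace.single i 1) * w x j|
        ≤ ∑ i : Fin 2, |∑ j : Fin 2,
            ∫ x in O, u x i * (fderiv ℝ (fun y => v y j) x) (EuclideanSpace.single i 1) * w x j| :=
          Finset.abs_sum_le_sum_abs _ _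
      _ ≤ ∑ i : Fin 2, ∑ j : Fin 2,
            |∫ x in O, u x i * (fderiv ℝ (fun y => v y j) x) (EuclideanSpace.single i 1) * w x j| :=
          Finset.sum_le_sum (fun i _ => Finset.abs_sum_le_sum_abs _ _)
      _ ≤ ∑ i : Fin 2, ∑ j : Fin 2, A i * D j * B i j := by
          refine Finset.sum_le_sum (fun i _ => Finset.sum_le_sum (fun j _ => ?_))
          have hset : (∫ x in O,
              u x i * (fderiv ℝ (fun y => v y j) x) (EuclideanSpace.single i 1) * w x j) =
              ∫ x, u x i * (fderiv ℝ (fun y => v y j) x) (EuclideanSpace.single i 1) * w x j := by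
            apply setIntegral_eq_integral_of_forall_compl_eq_zero
            intro x hx
            have : u x = 0 := image_eq_zero_of_notMem_tsupport (fun h => hx (huO h))
            rw [this]
            simp
          rw [hset]
          exact termBound hu huc hv hvc hw hwc i j
  -- step 2 : discrete Cauchy-Schwarz on the double sum
  have hstep2 : ∑ i : Fin 2, ∑ j : Fin 2, A i * D j * B i j ≤
      Real.sqrt ((∑ i : Fin 2, (A i)^2) * (∑ j : Fin 2, (D j)^2)) *
      Real.sqrt (∑ i : Fin 2, ∑ j : Fin 2, (B i j)^2) := by
    have hcs := Real.sum_mul_le_sqrt_mul_sqrt (Finset.univ : Finset (Fin 2 × Fin 2))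
      (fun p => A p.1 * D p.2) (fun p => B p.1 p.2)
    have e1 : ∑ p : Fin 2 × Fin 2, (A p.1 * D p.2) * B p.1 p.2
        = ∑ i : Fin 2, ∑ j : Fin 2, A i * D j * B i j := by
      rw [← Finset.univ_product_univ, Finset.sum_product]
    have e2 : ∑ p : Fin 2 × Fin 2, (A p.1 * D p.2)^2
        = (∑ i : Fin 2, (A i)^2) * (∑ j : Fin 2, (D j)^2) := by
      rw [← Finset.univ_product_univ, Finset.sum_product, Finset.sum_mul_sum]
      congr 1; ext i; congr 1; ext j; ring
    have e3 : ∑ p : Fin 2 × Fin 2, (B p.1 p.2)^2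
        = ∑ i : Fin 2, ∑ j : Fin 2, (B i j)^2 := by
      rw [← Finset.univ_product_univ, Finset.sum_product]
    rw [e1, e2, e3] at hcs
    exact hcs
  -- step 3 : B sums give Vnorm v
  have hBsum : Real.sqrt (∑ i : Fin 2, ∑ j : Fin 2, (B i j)^2) = Vnorm O v := by
    have hIntij : ∀ i j : Fin 2, Integrable
        (fun x => ((fderiv ℝ (fun y => v y j) x) (EuclideanSpace.single i 1))^2) volume := by
      intro i j
      exact ((pd_continuous (comp_contDiff hv j) _).pow 2).integrable_of_hasCompactSupport
        (sq_hcs (pd_hcs (comp_hcs hvc j) _))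
    have hBsq : ∀ i j, (B i j)^2 =
        ∫ x, ((fderiv ℝ (fun y => v y j) x) (EuclideanSpace.single i 1))^2 := by
      intro i j
      rw [hBdef]
      exact Real.sq_sqrt (integral_nonneg (fun x => sq_nonneg _))
    rw [Vnorm]
    congr 1
    simp_rw [hBsq]
    calc ∑ i : Fin 2, ∑ j : Fin 2,
          ∫ x, ((fderiv ℝ (fun y => v y j) x) (EuclideanSpace.single i 1))^2
        = ∑ i : Fin 2, ∫ x, ∑ j : Fin 2,
            ((fderiv ℝ (fun y => v y j) x) (EuclideanSpace.single i 1))^2 :=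
          Finset.sum_congr rfl (fun i _ => (integral_finset_sum _ (fun j _ => hIntij i j)).symm)
      _ = ∫ x, ∑ i : Fin 2, ∑ j : Fin 2,
            ((fderiv ℝ (fun y => v y j) x) (EuclideanSpace.single i 1))^2 :=
          (integral_finset_sum _ (fun i _ => integrable_finset_sum _ (fun j _ => hIntij i j))).symm
      _ = ∫ x in O, ∑ i : Fin 2, ∑ j : Fin 2,
            ((fderiv ℝ (fun y => v y j) x) (EuclideanSpace.single i 1))^2 := by
          rw [setIntegral_eq_integral_of_forall_compl_eq_zero (fun x hx => ?_)]
          have hz : ∀ j : Fin 2, fderiv ℝ (fun y => v y j) x = 0 := fun j =>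
            fderiv_zero_outside (fun h => hx (hvO (tsup_comp v j h)))
          simp [hz]
  -- step 4 : A and D sums
  have hHu0 : 0 ≤ Hnorm O u := by rw [Hnorm]; exact Real.sqrt_nonneg _
  have hHw0 : 0 ≤ Hnorm O w := by rw [Hnorm]; exact Real.sqrt_nonneg _
  have hAsum : Real.sqrt (∑ i : Fin 2, (A i)^2) ≤
      Real.sqrt K * Real.sqrt (Hnorm O u) * Real.sqrt (Vnorm O u) := by
    have h1 : ∑ i : Fin 2, (A i)^2 ≤ K * Hnorm O u * Vnorm O u := by
      have : ∀ i : Fin 2, (A i)^2 = Real.sqrt (∫ x, (u x i)^4) := fun i => by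
        rw [hAdef]; exact Real.sq_sqrt (Real.sqrt_nonneg _)
      simp_rw [this]
      exact fieldBound hK0 hlady hu huc huO
    calc Real.sqrt (∑ i : Fin 2, (A i)^2) ≤ Real.sqrt (K * Hnorm O u * Vnorm O u) :=
        Real.sqrt_le_sqrt h1
      _ = Real.sqrt K * Real.sqrt (Hnorm O u) * Real.sqrt (Vnorm O u) := by
        rw [Real.sqrt_mul (mul_nonneg hK0.le hHu0), Real.sqrt_mul hK0.le]
  have hDsum : Real.sqrt (∑ j : Fin 2, (D j)^2) ≤
      Real.sqrt K * Real.sqrt (Hnorm O w) * Real.sqrt (Vnorm O w) := by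
    have h1 : ∑ j : Fin 2, (D j)^2 ≤ K * Hnorm O w * Vnorm O w := by
      have : ∀ j : Fin 2, (D j)^2 = Real.sqrt (∫ x, (w x j)^4) := fun j => by
        rw [hDdef]; exact Real.sq_sqrt (Real.sqrt_nonneg _)
      simp_rw [this]
      exact fieldBound hK0 hlady hw hwc hwO
    calc Real.sqrt (∑ j : Fin 2, (D j)^2) ≤ Real.sqrt (K * Hnorm O w * Vnorm O w) :=
        Real.sqrt_le_sqrt h1
      _ = Real.sqrt K * Real.sqrt (Hnorm O w) * Real.sqrt (Vnorm O w) := by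
        rw [Real.sqrt_mul (mul_nonneg hK0.le hHw0), Real.sqrt_mul hK0.le]
  -- conclusion
  have hVv : 0 ≤ Vnorm O v := by rw [Vnorm]; exact Real.sqrt_nonneg _
  calc |trilinB O u v w|
      ≤ ∑ i : Fin 2, ∑ j : Fin 2, A i * D j * B i j := hstep1
    _ ≤ Real.sqrt ((∑ i : Fin 2, (A i)^2) * (∑ j : Fin 2, (D j)^2)) *
        Real.sqrt (∑ i : Fin 2, ∑ j : Fin 2, (B i j)^2) := hstep2
    _ = Real.sqrt (∑ i : Fin 2, (A i)^2) * Real.sqrt (∑ j : Fin 2, (D j)^2) * Vnorm O v := by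
        rw [Real.sqrt_mul (Finset.sum_nonneg (fun i _ => sq_nonneg _)), hBsum]
    _ ≤ (Real.sqrt K * Real.sqrt (Hnorm O u) * Real.sqrt (Vnorm O u)) *
        (Real.sqrt K * Real.sqrt (Hnorm O w) * Real.sqrt (Vnorm O w)) * Vnorm O v := by
        have h1 : 0 ≤ Real.sqrt (∑ i : Fin 2, (A i)^2) := Real.sqrt_nonneg _
        have h2 : 0 ≤ Real.sqrt (∑ j : Fin 2, (D j)^2) := Real.sqrt_nonneg _
        have h3 : 0 ≤ Real.sqrt K * Real.sqrt (Hnorm O u) * Real.sqrt (Vnorm O u) := by positivity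
        exact mul_le_mul_of_nonneg_right
          (mul_le_mul hAsum hDsum h2 h3) hVv
    _ = K * Real.sqrt (Hnorm O u) * Real.sqrt (Vnorm O u) *
          Vnorm O v * Real.sqrt (Hnorm O w) * Real.sqrt (Vnorm O w) := by
        have hKK : Real.sqrt K * Real.sqrt K = K := Real.mul_self_sqrt hK0.le
        have expand : (Real.sqrt K * Real.sqrt (Hnorm O u) * Real.sqrt (Vnorm O u)) *
            (Real.sqrt K * Real.sqrt (Hnorm O w) * Real.sqrt (Vnorm O w)) * Vnorm O v =
            (Real.sqrt K * Real.sqrt K) * (Real.sqrt (Hnorm O u) * Real.sqrt (Vnorm O u) *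
              Vnorm O v * Real.sqrt (Hnorm O w) * Real.sqrt (Vnorm O w)) := by ring
        rw [expand, hKK]; ring
end

section
/- Let K : ℝ × Ω → ℝ≥0 be defined by K(τ,ω) = sup_{s ≤ τ} ∫_{−∞}^{0} e^{νλ₁ρ + 2|z(θ_ρ ω)| + 2σ ∫_ρ^0 z(θ_η ω) dη} ‖f(ρ+s)‖²_H dρ, where z satisfies the sublinear growth properties (Z3)–(Z4) and f is backward tempered in the sense that sup_{s≤τ} ∫_{−∞}^{s} e^{γ(ξ−s)}‖f(ξ)‖²_H dξ < ∞ for every γ > 0. Then K(τ,ω) < +∞ for all (τ,ω), and τ ↦ K(τ,ω) is nondecreasing. -/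
/-!
Sublinear growth of `z(θ_ρ ω)` and of its running averages makes the exponent
`νλ₁ρ + 2|z(θ_ρ ω)| + 2σ∫_ρ^0 z(θ_η ω) dη` at most `νλ₁ρ/2 + C` for `ρ ≤ 0`. The integrand of `K`
is therefore dominated by `e^C e^{νλ₁ρ/2} ‖f(ρ+s)‖²`, whose integral over `ρ ≤ 0` is, after the
shift `ξ = ρ + s`, the tempered quantity `∫_{-∞}^s e^{γ(ξ-s)} ‖f(ξ)‖² dξ` with `γ = νλ₁/2`.
Its bound uniform in `s ≤ τ` bounds `K(τ, ω)`, and enlarging `τ` enlarges the set whose supremum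
is `K(τ, ω)`.
-/

open Filter MeasureTheory Asymptotics Set

theorem exists_le_mul_abs_add_of_isLittleO_atBot {φ : ℝ → ℝ} (hφ : Continuous φ)
    (ho : φ =o[atBot] id) {ε : ℝ} (hε : 0 < ε) : ∃ C, ∀ ρ ≤ 0, φ ρ ≤ ε * |ρ| + C := by
  obtain ⟨R, hR⟩ := (ho.bound hε).exists_forall_of_atBot
  obtain ⟨M, hM⟩ := (isCompact_Icc (a := R) (b := 0)).bddAbove_image hφ.continuousOn
  refine ⟨max M 0, fun ρ hρ => ?_⟩
  rcases le_or_gt ρ R with hρR | hRρ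
  · have := hR ρ hρR
    rw [Real.norm_eq_abs, Real.norm_eq_abs, id] at this
    linarith [le_abs_self (φ ρ), le_max_right M 0]
  · have := hM (mem_image_of_mem φ ⟨hRρ.le, hρ⟩)
    linarith [le_max_left M 0, mul_nonneg hε.le (abs_nonneg ρ)]

theorem isLittleO_id_atBot_of_tendsto_div {u : ℝ → ℝ}
    (hu : Tendsto (fun r => u r / r) atBot (nhds 0)) : u =o[atBot] id :=
  (isLittleO_iff_tendsto' ((eventually_lt_atBot 0).mono fun _ hr h => absurd h hr.ne)).2 hu

theorem intervalIntegral_to_zero_eq_neg {g : ℝ → ℝ} :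
    (fun ρ => ∫ η in ρ..0, g η) = fun ρ => -∫ η in (0 : ℝ)..ρ, g η :=
  funext fun ρ => intervalIntegral.integral_symm 0 ρ

theorem continuous_intervalIntegral_to_zero {g : ℝ → ℝ} (hg : Continuous g) :
    Continuous fun ρ => ∫ η in ρ..0, g η := by
  rw [intervalIntegral_to_zero_eq_neg]
  exact (intervalIntegral.continuous_primitive (fun a b => hg.intervalIntegrable a b) 0).neg

theorem exists_exponent_le_of_sublinear {g : ℝ → ℝ} (hg : Continuous g)
    (hg_grow : Tendsto (fun r => |g r| / |r|) atBot (nhds 0))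
    (hg_avg : Tendsto (fun r => (1 / r) * ∫ ξ in (0 : ℝ)..r, g ξ) atBot (nhds 0))
    {a : ℝ} (ha : 0 < a) (σ : ℝ) :
    ∃ C, ∀ ρ ≤ 0, a * ρ + 2 * |g ρ| + 2 * σ * ∫ η in ρ..(0 : ℝ), g η ≤ a / 2 * ρ + C := by
  have hg_o : g =o[atBot] id := by
    refine isLittleO_id_atBot_of_tendsto_div ((tendsto_zero_iff_abs_tendsto_zero _).2 ?_)
    simpa only [Function.comp_def, abs_div] using hg_grow
  have hG_o : (fun ρ => ∫ η in ρ..(0 : ℝ), g η) =o[atBot] id := by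
    rw [intervalIntegral_to_zero_eq_neg]
    refine (isLittleO_id_atBot_of_tendsto_div ?_).neg_left
    simpa only [one_div_mul_eq_div] using hg_avg
  obtain ⟨C, hC⟩ := exists_le_mul_abs_add_of_isLittleO_atBot
    ((hg.abs.const_mul 2).add ((continuous_intervalIntegral_to_zero hg).const_mul (2 * σ)))
    ((isLittleO_abs_left.2 hg_o).const_mul_left 2 |>.add (hG_o.const_mul_left (2 * σ)))
    (half_pos ha)
  refine ⟨C, fun ρ hρ => ?_⟩
  have := hC ρ hρ
  rw [Pi.add_apply, abs_of_nonpos hρ] at this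
  linarith

section ShiftIic

variable {E : Type*} [NormedAddCommGroup E] {g : ℝ → E} (s : ℝ)

theorem measurePreserving_add_right_restrict_Iic :
    MeasurePreserving (· + s) (volume.restrict (Iic 0)) (volume.restrict (Iic s)) := by
  simpa only [preimage_add_const_Iic, sub_self] using
    (measurePreserving_add_right volume s).restrict_preimage (s := Iic s) measurableSet_Iic

theorem integrableOn_Iic_comp_add_right (hg : IntegrableOn g (Iic s)) :
    IntegrableOn (fun ρ => g (ρ + s)) (Iic 0) :=
  ((measurePreserving_add_right_restrict_Iic s).integrable_comp_emb
    (measurableEmbedding_addRight s)).2 hg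

theorem setIntegral_Iic_comp_add_right [NormedSpace ℝ E] :
    ∫ ρ in Iic 0, g (ρ + s) = ∫ ξ in Iic s, g ξ :=
  (measurePreserving_add_right_restrict_Iic s).integral_comp (measurableEmbedding_addRight s) g

end ShiftIic

theorem exp_mul_le_exp_mul_exp_mul {a b c C : ℝ} (hb : 0 ≤ b) (h : a ≤ c + C) :
    Real.exp a * b ≤ Real.exp C * (Real.exp c * b) := by
  rw [← mul_assoc, ← Real.exp_add]
  exact mul_le_mul_of_nonneg_right (Real.exp_le_exp.2 (by linarith)) hb

section ExpDomination

variable {α : Type*} [MeasurableSpace α] {μ : Measure α} {S : Set α} {φ ψ h : α → ℝ} {C : ℝ}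

theorem integrableOn_exp_mul_of_le (hφ : Measurable φ) (hψ : Measurable ψ) (hS : MeasurableSet S)
    (hh : ∀ x ∈ S, 0 ≤ h x) (hle : ∀ x ∈ S, φ x ≤ ψ x + C)
    (hint : IntegrableOn (fun x => Real.exp (ψ x) * h x) S μ) :
    IntegrableOn (fun x => Real.exp (φ x) * h x) S μ := by
  -- `h` itself need not be measurable: factor the integrand through the integrable one
  have hmeas : AEStronglyMeasurable (fun x => Real.exp (φ x) * h x) (μ.restrict S) := by
    have := ((hφ.sub hψ).exp.aestronglyMeasurable (μ := μ.restrict S)).mul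
      hint.aestronglyMeasurable
    refine this.congr (Eventually.of_forall fun x => ?_)
    rw [Pi.mul_apply, Pi.sub_apply, ← mul_assoc, ← Real.exp_add, sub_add_cancel]
  refine (hint.const_mul (Real.exp C)).mono' hmeas ((ae_restrict_iff' hS).2 ?_)
  refine Eventually.of_forall fun x hx => ?_
  rw [Real.norm_of_nonneg (mul_nonneg (Real.exp_pos _).le (hh x hx))]
  exact exp_mul_le_exp_mul_exp_mul (hh x hx) (hle x hx)

theorem setIntegral_exp_mul_le_of_le (hφ : Measurable φ) (hψ : Measurable ψ)
    (hS : MeasurableSet S) (hh : ∀ x ∈ S, 0 ≤ h x) (hle : ∀ x ∈ S, φ x ≤ ψ x + C)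
    (hint : IntegrableOn (fun x => Real.exp (ψ x) * h x) S μ) :
    ∫ x in S, Real.exp (φ x) * h x ∂μ ≤ Real.exp C * ∫ x in S, Real.exp (ψ x) * h x ∂μ := by
  rw [← integral_const_mul]
  exact setIntegral_mono_on (integrableOn_exp_mul_of_le hφ hψ hS hh hle hint)
    (hint.const_mul _) hS fun x hx => exp_mul_le_exp_mul_exp_mul (hh x hx) (hle x hx)

end ExpDomination

theorem monotone_sSup_setOf_exists_le {α : Type*} [Preorder α] {F : α → ℝ}
    (hF : ∀ τ, BddAbove {a | ∃ s ≤ τ, a = F s}) :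
    Monotone fun τ => sSup {a | ∃ s ≤ τ, a = F s} := fun τ₁ τ₂ hτ =>
  csSup_le_csSup (hF τ₂) ⟨_, τ₁, le_rfl, rfl⟩ fun _ ⟨s, hs, ha⟩ => ⟨s, hs.trans hτ, ha⟩

theorem stmt13_general {H Ω : Type*} [NormedAddCommGroup H]
    (ν lam σ : ℝ) (hν : 0 < ν) (hlam : 0 < lam)
    (θ : ℝ → Ω → Ω) (z : Ω → ℝ) (ω : Ω) (f : ℝ → H)
    (hzcont : Continuous fun r : ℝ => z (θ r ω))
    (hzgrow_bot : Tendsto (fun r : ℝ => |z (θ r ω)| / |r|) atBot (nhds 0))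
    (hzavg_bot : Tendsto (fun r : ℝ => (1 / r) * ∫ ξ in (0 : ℝ)..r, z (θ ξ ω))
      atBot (nhds 0))
    -- `f` is backward tempered:
    (hftemp_int : ∀ γ : ℝ, 0 < γ → ∀ s : ℝ,
      IntegrableOn (fun ξ => Real.exp (γ * (ξ - s)) * ‖f ξ‖ ^ 2) (Set.Iic s))
    (hftemp_bdd : ∀ γ : ℝ, 0 < γ → ∀ τ : ℝ,
      BddAbove {a : ℝ | ∃ s ≤ τ,
        a = ∫ ξ in Set.Iic s, Real.exp (γ * (ξ - s)) * ‖f ξ‖ ^ 2}) :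
    (∀ s : ℝ, IntegrableOn
      (fun ρ => Real.exp (ν * lam * ρ + 2 * |z (θ ρ ω)| +
        2 * σ * ∫ η in ρ..(0 : ℝ), z (θ η ω)) * ‖f (ρ + s)‖ ^ 2) (Set.Iic 0)) ∧
    (∀ τ : ℝ, BddAbove {a : ℝ | ∃ s ≤ τ,
      a = ∫ ρ in Set.Iic (0 : ℝ), Real.exp (ν * lam * ρ + 2 * |z (θ ρ ω)| +
        2 * σ * ∫ η in ρ..(0 : ℝ), z (θ η ω)) * ‖f (ρ + s)‖ ^ 2}) ∧
    Monotone (fun τ : ℝ => sSup {a : ℝ | ∃ s ≤ τ,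
      a = ∫ ρ in Set.Iic (0 : ℝ), Real.exp (ν * lam * ρ + 2 * |z (θ ρ ω)| +
        2 * σ * ∫ η in ρ..(0 : ℝ), z (θ η ω)) * ‖f (ρ + s)‖ ^ 2}) := by
  set γ := ν * lam / 2
  have hγ : 0 < γ := by positivity
  obtain ⟨C, hC⟩ := exists_exponent_le_of_sublinear hzcont hzgrow_bot hzavg_bot
    (mul_pos hν hlam) σ
  have hexp : Measurable fun ρ => ν * lam * ρ + 2 * |z (θ ρ ω)| +
      2 * σ * ∫ η in ρ..(0 : ℝ), z (θ η ω) :=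
    ((continuous_const.mul continuous_id).add (hzcont.abs.const_mul 2)).add
      ((continuous_intervalIntegral_to_zero hzcont).const_mul _) |>.measurable
  have hlin : Measurable fun ρ : ℝ => γ * ρ := measurable_const.mul measurable_id
  have hbase (s : ℝ) : IntegrableOn (fun ρ => Real.exp (γ * ρ) * ‖f (ρ + s)‖ ^ 2) (Iic 0) := by
    simpa using integrableOn_Iic_comp_add_right s (hftemp_int γ hγ s)
  have hint (s : ℝ) := integrableOn_exp_mul_of_le hexp hlin measurableSet_Iic
    (fun ρ _ => sq_nonneg ‖f (ρ + s)‖) hC (hbase s)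
  have hshift (s : ℝ) : ∫ ρ in Iic 0, Real.exp (γ * ρ) * ‖f (ρ + s)‖ ^ 2 =
      ∫ ξ in Iic s, Real.exp (γ * (ξ - s)) * ‖f ξ‖ ^ 2 := by
    simpa using setIntegral_Iic_comp_add_right s
      (g := fun ξ => Real.exp (γ * (ξ - s)) * ‖f ξ‖ ^ 2)
  have hK (s : ℝ) := (setIntegral_exp_mul_le_of_le hexp hlin measurableSet_Iic
    (fun ρ _ => sq_nonneg ‖f (ρ + s)‖) hC (hbase s)).trans_eq
      (congrArg (Real.exp C * ·) (hshift s))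
  have hbdd (τ : ℝ) : BddAbove {a : ℝ | ∃ s ≤ τ,
      a = ∫ ρ in Set.Iic (0 : ℝ), Real.exp (ν * lam * ρ + 2 * |z (θ ρ ω)| +
        2 * σ * ∫ η in ρ..(0 : ℝ), z (θ η ω)) * ‖f (ρ + s)‖ ^ 2} := by
    obtain ⟨M, hM⟩ := hftemp_bdd γ hγ τ
    refine ⟨Real.exp C * M, ?_⟩
    rintro _ ⟨s, hs, rfl⟩
    exact (hK s).trans (by gcongr; exact hM ⟨s, hs, rfl⟩)
  exact ⟨hint, hbdd, monotone_sSup_setOf_exists_le hbdd⟩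

/-- Finiteness and monotonicity of the absorbing-radius function
`K(τ,ω) = sup_{s≤τ} ∫_{−∞}^0 e^{νλ₁ρ + 2|z(θ_ρ ω)| + 2σ∫_ρ^0 z(θ_η ω)dη} ‖f(ρ+s)‖² dρ`:
each integral is finite, the family is bounded uniformly in `s ≤ τ`,
and `τ ↦ K(τ,ω)` is nondecreasing. -/
theorem stmt13 {H Ω : Type*} [NormedAddCommGroup H]
    (ν lam σ : ℝ) (hν : 0 < ν) (hlam : 0 < lam) (hσ : 0 < σ)
    (θ : ℝ → Ω → Ω) (z : Ω → ℝ) (ω : Ω) (f : ℝ → H)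
    (hzcont : Continuous fun r : ℝ => z (θ r ω))
    (hzgrow_top : Tendsto (fun r : ℝ => |z (θ r ω)| / |r|) atTop (nhds 0))
    (hzgrow_bot : Tendsto (fun r : ℝ => |z (θ r ω)| / |r|) atBot (nhds 0))
    (hzavg_top : Tendsto (fun r : ℝ => (1 / r) * ∫ ξ in (0 : ℝ)..r, z (θ ξ ω))
      atTop (nhds 0))
    (hzavg_bot : Tendsto (fun r : ℝ => (1 / r) * ∫ ξ in (0 : ℝ)..r, z (θ ξ ω))
      atBot (nhds 0))
    (hfloc : ∀ a b : ℝ, IntegrableOn (fun ξ => ‖f ξ‖ ^ 2) (Set.Icc a b))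
    -- `f` is backward tempered:
    (hftemp_int : ∀ γ : ℝ, 0 < γ → ∀ s : ℝ,
      IntegrableOn (fun ξ => Real.exp (γ * (ξ - s)) * ‖f ξ‖ ^ 2) (Set.Iic s))
    (hftemp_bdd : ∀ γ : ℝ, 0 < γ → ∀ τ : ℝ,
      BddAbove {a : ℝ | ∃ s ≤ τ,
        a = ∫ ξ in Set.Iic s, Real.exp (γ * (ξ - s)) * ‖f ξ‖ ^ 2}) :
    (∀ s : ℝ, IntegrableOn
      (fun ρ => Real.exp (ν * lam * ρ + 2 * |z (θ ρ ω)| +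
        2 * σ * ∫ η in ρ..(0 : ℝ), z (θ η ω)) * ‖f (ρ + s)‖ ^ 2) (Set.Iic 0)) ∧
    (∀ τ : ℝ, BddAbove {a : ℝ | ∃ s ≤ τ,
      a = ∫ ρ in Set.Iic (0 : ℝ), Real.exp (ν * lam * ρ + 2 * |z (θ ρ ω)| +
        2 * σ * ∫ η in ρ..(0 : ℝ), z (θ η ω)) * ‖f (ρ + s)‖ ^ 2}) ∧
    Monotone (fun τ : ℝ => sSup {a : ℝ | ∃ s ≤ τ,
      a = ∫ ρ in Set.Iic (0 : ℝ), Real.exp (ν * lam * ρ + 2 * |z (θ ρ ω)| +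
        2 * σ * ∫ η in ρ..(0 : ℝ), z (θ η ω)) * ‖f (ρ + s)‖ ^ 2}) :=
  stmt13_general ν lam σ hν hlam θ z ω f hzcont hzgrow_bot hzavg_bot hftemp_int hftemp_bdd
end

section
/- Assume y, g, h : [t₀, t₀+2] → ℝ≥0 satisfy y' ≤ g y + h a.e., ∫_{t₀}^{t₀+2} y(s) ds ≤ a₁, ∫_{t₀}^{t₀+2} g(s) ds ≤ a₂, ∫_{t₀}^{t₀+2} h(s) ds ≤ a₃ (with y absolutely continuous, g, h integrable). Then for all t ∈ [t₀+1, t₀+2], y(t) ≤ (a₁ + a₃) e^{a₂} (uniform Gronwall lemma, with r = 1). -/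
/-!
Integrating factor: on `[s, t]` the function `y · exp (-∫ₛ g)` is absolutely continuous with
derivative `(y' - g y) exp (-∫ₛ g) ≤ h`, so `y t ≤ (y s + a₃) e^{a₂}` for every
`s ∈ [t - 1, t]`. Averaging this in `s` over an interval of length one replaces `y s` by
`∫_{t-1}^t y ≤ a₁`.
-/

open MeasureTheory Set Filter

namespace AbsolutelyContinuousOnInterval

variable {a b : ℝ}

theorem congr {X : Type*} [PseudoMetricSpace X] {f g : ℝ → X}
    (hf : AbsolutelyContinuousOnInterval f a b) (hfg : EqOn f g (uIcc a b)) :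
    AbsolutelyContinuousOnInterval g a b := by
  refine Tendsto.congr' ?_ hf
  filter_upwards [mem_inf_of_right (mem_principal_self _)] with E hE
  exact Finset.sum_congr rfl fun i hi ↦ by rw [hfg (hE.1 i hi).1, hfg (hE.1 i hi).2]

theorem const_add {f : ℝ → ℝ} (c : ℝ) (hf : AbsolutelyContinuousOnInterval f a b) :
    AbsolutelyContinuousOnInterval (fun x ↦ c + f x) a b :=
  (LipschitzWith.const c).lipschitzOnWith.absolutelyContinuousOnInterval.fun_add hf

theorem comp_lipschitzOnWith {X Y : Type*} [PseudoMetricSpace X] [PseudoMetricSpace Y]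
    {f : ℝ → X} {φ : X → Y} {K : NNReal} {s : Set X} (hφ : LipschitzOnWith K φ s)
    (hfs : MapsTo f (uIcc a b) s) (hf : AbsolutelyContinuousOnInterval f a b) :
    AbsolutelyContinuousOnInterval (φ ∘ f) a b := by
  have hK : Tendsto (fun E : ℕ × (ℕ → ℝ × ℝ) ↦
      K * ∑ i ∈ Finset.range E.1, dist (f (E.2 i).1) (f (E.2 i).2))
      (totalLengthFilter ⊓ 𝓟 (disjWithin a b)) (nhds 0) := by
    simpa only [mul_zero] using Tendsto.const_mul (K : ℝ) hf
  refine squeeze_zero' (Eventually.of_forall fun _ ↦ Finset.sum_nonneg fun _ _ ↦ dist_nonneg)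
    ?_ hK
  filter_upwards [mem_inf_of_right (mem_principal_self _)] with E hE
  rw [Finset.mul_sum]
  exact Finset.sum_le_sum fun i hi ↦ hφ.dist_le_mul _ (hfs (hE.1 i hi).1) _ (hfs (hE.1 i hi).2)

theorem comp_contDiff {f φ : ℝ → ℝ} (hφ : ContDiff ℝ 1 φ)
    (hf : AbsolutelyContinuousOnInterval f a b) :
    AbsolutelyContinuousOnInterval (fun x ↦ φ (f x)) a b := by
  obtain ⟨C, hC⟩ := hf.exists_bound
  obtain ⟨K, hK⟩ := hφ.contDiffOn.exists_lipschitzOnWith one_ne_zero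
    (convex_closedBall (0 : ℝ) C) (isCompact_closedBall 0 C)
  exact hf.comp_lipschitzOnWith hK fun x hx ↦ mem_closedBall_zero_iff.mpr (hC x hx)

theorem le_mul_exp_integral_of_ae_deriv_le {y g h : ℝ → ℝ} (hab : a ≤ b)
    (hy : AbsolutelyContinuousOnInterval y a b)
    (hg : IntervalIntegrable g volume a b) (hg0 : ∀ x ∈ Icc a b, 0 ≤ g x)
    (hh : IntervalIntegrable h volume a b) (hh0 : ∀ x ∈ Icc a b, 0 ≤ h x)
    (hy' : ∀ᵐ x, x ∈ Ioo a b → deriv y x ≤ g x * y x + h x) :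
    y b ≤ (y a + ∫ x in a..b, h x) * Real.exp (∫ x in a..b, g x) := by
  let G : ℝ → ℝ := fun x ↦ ∫ u in a..x, g u
  let E : ℝ → ℝ := fun x ↦ Real.exp (-G x)
  have hE : AbsolutelyContinuousOnInterval E a b :=
    (hg.absolutelyContinuousOnInterval_intervalIntegral left_mem_uIcc).neg.comp_contDiff
      Real.contDiff_exp
  have hE_le_one : ∀ x ∈ Icc a b, E x ≤ 1 := fun x hx ↦
    Real.exp_le_one_iff.mpr <| neg_nonpos.mpr <|
      intervalIntegral.integral_nonneg hx.1 fun u hu ↦ hg0 u ⟨hu.1, hu.2.trans hx.2⟩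
  have hderiv : ∀ᵐ x, x ∈ Ioo a b → deriv y x * E x + y x * deriv E x ≤ h x * E x := by
    filter_upwards [hg.ae_hasDerivAt_integral, hy'] with x hG hyx hx
    have hxab : x ∈ uIcc a b := by rw [uIcc_of_le hab]; exact Ioo_subset_Icc_self hx
    have hEx : HasDerivAt E (E x * -g x) x := (hG hxab a left_mem_uIcc).neg.exp
    rw [hEx.deriv]
    have hEx0 : 0 ≤ E x := (Real.exp_pos _).le
    linarith [mul_le_mul_of_nonneg_right (hyx hx) hEx0]
  have hbound : y b * E b - y a * E a ≤ ∫ x in a..b, h x :=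
    calc y b * E b - y a * E a = ∫ x in a..b, deriv y x * E x + y x * deriv E x :=
          (hy.integral_deriv_mul_eq_sub hE).symm
      _ ≤ ∫ x in a..b, h x * E x := by
          refine intervalIntegral.integral_mono_ae_restrict hab
            ((hy.intervalIntegrable_deriv.mul_continuousOn hE.continuousOn).add
              (hE.intervalIntegrable_deriv.continuousOn_mul hy.continuousOn))
            (hh.mul_continuousOn hE.continuousOn) ?_
          rw [← Measure.restrict_congr_set Ioo_ae_eq_Icc]
          exact (ae_restrict_iff' measurableSet_Ioo).mpr hderiv
      _ ≤ ∫ x in a..b, h x := intervalIntegral.integral_mono_on hab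
          (hh.mul_continuousOn hE.continuousOn) hh fun x hx ↦
            mul_le_of_le_one_right (hh0 x hx) (hE_le_one x hx)
  have hEa : E a = 1 := by simp [E, G]
  have hEb : E b * Real.exp (G b) = 1 := by rw [← Real.exp_add, neg_add_cancel, Real.exp_zero]
  calc y b = y b * E b * Real.exp (G b) := by rw [mul_assoc, hEb, mul_one]
    _ ≤ (y a + ∫ x in a..b, h x) * Real.exp (G b) := by
        gcongr
        rw [hEa, mul_one] at hbound
        linarith

end AbsolutelyContinuousOnInterval

theorem IntervalIntegrable.ae_hasDerivAt_of_eqOn_add_integral {y d : ℝ → ℝ} {a b : ℝ}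
    (hd : IntervalIntegrable d volume a b)
    (hy : ∀ x ∈ Icc a b, y x = y a + ∫ u in a..x, d u) :
    ∀ᵐ x, x ∈ Ioo a b → HasDerivAt y (d x) x := by
  filter_upwards [hd.ae_hasDerivAt_integral] with x hx hxab
  have hx' : x ∈ uIcc a b := Icc_subset_uIcc (Ioo_subset_Icc_self hxab)
  refine ((hx hx' a left_mem_uIcc).const_add (y a)).congr_of_eventuallyEq ?_
  filter_upwards [Ioo_mem_nhds hxab.1 hxab.2] with u hu using hy u (Ioo_subset_Icc_self hu)

theorem IntervalIntegrable.absolutelyContinuousOnInterval_of_eqOn_add_integral {y d : ℝ → ℝ}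
    {a b : ℝ} (hab : a ≤ b) (hd : IntervalIntegrable d volume a b)
    (hy : ∀ x ∈ Icc a b, y x = y a + ∫ u in a..x, d u) :
    AbsolutelyContinuousOnInterval y a b :=
  ((hd.absolutelyContinuousOnInterval_intervalIntegral left_mem_uIcc).const_add (y a)).congr
    fun x hx ↦ (hy x (uIcc_of_le hab ▸ hx)).symm

theorem intervalIntegral.integral_mono_interval_of_forall_nonneg {f : ℝ → ℝ} {a b c d : ℝ}
    (hf : IntervalIntegrable f volume a b) (hf0 : ∀ x ∈ Icc a b, 0 ≤ f x)
    (hac : a ≤ c) (hcd : c ≤ d) (hdb : d ≤ b) :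
    ∫ x in c..d, f x ≤ ∫ x in a..b, f x :=
  intervalIntegral.integral_mono_interval hac hcd hdb
    ((ae_restrict_iff' measurableSet_Ioc).mpr <|
      .of_forall fun x hx ↦ hf0 x (Ioc_subset_Icc_self hx)) hf

theorem le_add_integral_mul_of_forall_le {y : ℝ → ℝ} {t A B : ℝ}
    (hy : IntervalIntegrable y volume (t - 1) t)
    (h : ∀ s ∈ Icc (t - 1) t, y t ≤ (y s + A) * B) :
    y t ≤ ((∫ s in (t - 1)..t, y s) + A) * B :=
  calc y t = ∫ _ in (t - 1)..t, y t := by simp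
    _ ≤ ∫ s in (t - 1)..t, (y s + A) * B :=
        intervalIntegral.integral_mono_on (by linarith) intervalIntegrable_const
          ((hy.add intervalIntegrable_const).mul_const B) h
    _ = ((∫ s in (t - 1)..t, y s) + A) * B := by
        rw [intervalIntegral.integral_mul_const, intervalIntegral.integral_add hy
          intervalIntegrable_const]
        simp

theorem AbsolutelyContinuousOnInterval.le_add_mul_exp_of_ae_deriv_le {y g h : ℝ → ℝ}
    {a b s t A₂ A₃ : ℝ} (hy : AbsolutelyContinuousOnInterval y a b)
    (hg : IntervalIntegrable g volume a b) (hg0 : ∀ x ∈ Icc a b, 0 ≤ g x)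
    (hh : IntervalIntegrable h volume a b) (hh0 : ∀ x ∈ Icc a b, 0 ≤ h x)
    (hy0 : ∀ x ∈ Icc a b, 0 ≤ y x) (hy' : ∀ᵐ x, x ∈ Ioo a b → deriv y x ≤ g x * y x + h x)
    (hgA : ∫ x in a..b, g x ≤ A₂) (hhA : ∫ x in a..b, h x ≤ A₃)
    (has : a ≤ s) (hst : s ≤ t) (htb : t ≤ b) :
    y t ≤ (y s + A₃) * Real.exp A₂ := by
  have hIcc : Icc s t ⊆ Icc a b := Icc_subset_Icc has htb
  have hsub : uIcc s t ⊆ uIcc a b := uIcc_of_le hst ▸ hIcc.trans Icc_subset_uIcc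
  have hgron := (hy.mono hsub).le_mul_exp_integral_of_ae_deriv_le hst (hg.mono_set hsub)
    (fun x hx ↦ hg0 x (hIcc hx)) (hh.mono_set hsub) (fun x hx ↦ hh0 x (hIcc hx))
    (by filter_upwards [hy'] with x hx hxst using hx (Ioo_subset_Ioo has htb hxst))
  have hgA' := (intervalIntegral.integral_mono_interval_of_forall_nonneg hg hg0
    has hst htb).trans hgA
  have hhA' := (intervalIntegral.integral_mono_interval_of_forall_nonneg hh hh0
    has hst htb).trans hhA
  have hys : 0 ≤ y s := hy0 s ⟨has, hst.trans htb⟩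
  have hh_nonneg : 0 ≤ ∫ x in s..t, h x :=
    intervalIntegral.integral_nonneg hst fun x hx ↦ hh0 x (hIcc hx)
  calc y t ≤ (y s + ∫ x in s..t, h x) * Real.exp (∫ x in s..t, g x) := hgron
    _ ≤ (y s + A₃) * Real.exp A₂ := by
        gcongr
        linarith

/-- The uniform Gronwall lemma (with `r = 1`): if `y' ≤ g y + h` a.e. on `[t₀, t₀+2]`
with `∫ y ≤ a₁`, `∫ g ≤ a₂`, `∫ h ≤ a₃`, and `y, g, h ≥ 0`, then
`y(t) ≤ (a₁ + a₃) e^{a₂}` for all `t ∈ [t₀+1, t₀+2]`. -/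
theorem stmt16 (t₀ a₁ a₂ a₃ : ℝ) (y d g h : ℝ → ℝ)
    (hy0 : ∀ t ∈ Set.Icc t₀ (t₀ + 2), 0 ≤ y t)
    (hg0 : ∀ t ∈ Set.Icc t₀ (t₀ + 2), 0 ≤ g t)
    (hh0 : ∀ t ∈ Set.Icc t₀ (t₀ + 2), 0 ≤ h t)
    (hd : IntervalIntegrable d volume t₀ (t₀ + 2))
    (hAC : ∀ t ∈ Set.Icc t₀ (t₀ + 2), y t = y t₀ + ∫ s in t₀..t, d s)
    (hg : IntervalIntegrable g volume t₀ (t₀ + 2))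
    (hh : IntervalIntegrable h volume t₀ (t₀ + 2))
    (hineq : ∀ᵐ t ∂volume, t ∈ Set.Ioo t₀ (t₀ + 2) → d t ≤ g t * y t + h t)
    (hy_int : (∫ s in t₀..(t₀ + 2), y s) ≤ a₁)
    (hyint : IntervalIntegrable y volume t₀ (t₀ + 2))
    (hg_int : (∫ s in t₀..(t₀ + 2), g s) ≤ a₂)
    (hh_int : (∫ s in t₀..(t₀ + 2), h s) ≤ a₃) :
    ∀ t ∈ Set.Icc (t₀ + 1) (t₀ + 2), y t ≤ (a₁ + a₃) * Real.exp a₂ := by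
  have h02 : t₀ ≤ t₀ + 2 := by linarith
  have hyAC := hd.absolutelyContinuousOnInterval_of_eqOn_add_integral h02 hAC
  have hy' : ∀ᵐ x, x ∈ Ioo t₀ (t₀ + 2) → deriv y x ≤ g x * y x + h x := by
    filter_upwards [hd.ae_hasDerivAt_of_eqOn_add_integral hAC, hineq] with x hyx hx hxI
    rw [(hyx hxI).deriv]
    exact hx hxI
  rintro t ⟨ht₁, ht₂⟩
  have hsub : uIcc (t - 1) t ⊆ uIcc t₀ (t₀ + 2) := by
    rw [uIcc_of_le (by linarith), uIcc_of_le h02]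
    exact Icc_subset_Icc (by linarith) ht₂
  calc y t ≤ ((∫ s in (t - 1)..t, y s) + a₃) * Real.exp a₂ :=
        le_add_integral_mul_of_forall_le (hyint.mono_set hsub) fun s hs ↦
          hyAC.le_add_mul_exp_of_ae_deriv_le hg hg0 hh hh0 hy0 hy' hg_int hh_int
            (by linarith [hs.1]) hs.2 ht₂
    _ ≤ (a₁ + a₃) * Real.exp a₂ := by
        gcongr
        exact (intervalIntegral.integral_mono_interval_of_forall_nonneg hyint hy0
          (by linarith) (by linarith) ht₂).trans hy_int
end
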